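/- Let Π = (Π′, Π″) be a nontrivial partition with 1 ∈ Π′, and let ℋ_1|Π = {B ∈ ℋ_1 : B splits along Π}. Then ℋ_1|Π = {H(σ) : σ ∈ Σ_r, σ(1) = 1, σ({1, …, r′}) = Π′}, and in particular |ℋ_1|Π| = (r′−1)!·r″!. -/

import Mathlib

open scoped BigOperators

attribute [local instance] Classical.propDecidable

noncomputable section

namespace Verlinde


variable {r : ℕ}

/-- The root `α^{ij} = e_i - e_j`, viewed as the linear functional `x_i - x_j`. -/
def stdRoot (r : ℕ) (i j : Fin r) : Fin r → ℝ :=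
  fun t => (if t = i then 1 else 0) - (if t = j then 1 else 0)

/-- `B ∈ 𝓑`: an ordered tuple of roots forming a linear basis of
`V* = {a : ∑ i, a i = 0}`. -/
def IsOB (r : ℕ) (B : Fin (r - 1) → Fin r → ℝ) : Prop :=
  (∀ m, ∃ i j, i ≠ j ∧ B m = stdRoot r i j) ∧
    LinearIndependent ℝ B ∧
    ∀ a : Fin r → ℝ, (∑ i, a i) = 0 → a ∈ Submodule.span ℝ (Set.range B)

/-- Coordinates of `a` with respect to the tuple `B` (junk unless such
coordinates exist; they are unique when `B` is linearly independent). -/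
def coordsOf (B : Fin (r - 1) → Fin r → ℝ) (a : Fin r → ℝ) : Fin (r - 1) → ℝ :=
  if h : ∃ c : Fin (r - 1) → ℝ, a = ∑ j, c j • B j then h.choose else 0

/-- The integer part `[a]_B ∈ Λ`. -/
def intPart (B : Fin (r - 1) → Fin r → ℝ) (a : Fin r → ℝ) : Fin r → ℝ :=
  ∑ j, (⌊coordsOf B a j⌋ : ℝ) • B j

/-- The fractional part `{a}_B`. -/
def fracPart (B : Fin (r - 1) → Fin r → ℝ) (a : Fin r → ℝ) : Fin r → ℝ :=
  a - intPart B a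

/-- `a ∈ V*` is regular if all its `B`-coordinates are non-integral, for every `B ∈ 𝓑`,
i.e. `{a}_B ∈ ∑_j (0,1)·β^{[j]}` for every `B ∈ 𝓑`. -/
def IsRegular (r : ℕ) (a : Fin r → ℝ) : Prop :=
  ∀ B, IsOB r B → ∀ j, Int.fract (coordsOf B a j) ≠ 0

/-- The flag `Fl(B)`: `Fl(B) j = span (β^{[j]}, …, β^{[r-1]})`. -/
def flagOf (B : Fin (r - 1) → Fin r → ℝ) : Fin (r - 1) → Submodule ℝ (Fin r → ℝ) :=
  fun j => Submodule.span ℝ {x | ∃ i, j ≤ i ∧ B i = x}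

/-- `B ⊣ C`. -/
def Dashv (B C : Fin (r - 1) → Fin r → ℝ) : Prop :=
  ∀ τ : Equiv.Perm (Fin (r - 1)), flagOf (B ∘ τ) ≠ flagOf C

/-- A diagonal basis: a subset of `𝓑` of cardinality `(r-1)!` any two distinct
members of which satisfy `B ⊣ C`. -/
def IsDiagonalBasis (r : ℕ) (D : Finset (Fin (r - 1) → Fin r → ℝ)) : Prop :=
  D.card = (r - 1).factorial ∧ (∀ B ∈ D, IsOB r B) ∧
    ∀ B ∈ D, ∀ C ∈ D, B ≠ C → Dashv B C

/-- The index of the last coordinate (`r` in `1`-indexed notation). -/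
def lastI (r : ℕ) (h : 0 < r) : Fin r := ⟨r - 1, by omega⟩

/-- `ρ = ((r-1)/2, (r-3)/2, …, (1-r)/2)`. -/
def rho (r : ℕ) : Fin r → ℝ := fun i => ((r : ℝ) - 1) / 2 - (i : ℝ)

/-- `σ · a`, where `(σ·a)_i = a_{σ⁻¹ i}`. -/
def permVec (σ : Equiv.Perm (Fin r)) (a : Fin r → ℝ) : Fin r → ℝ := fun i => a (σ⁻¹ i)

/-- A nontrivial (ordered) partition `Π = (Π′, Π″)`, encoded by `Π′ = P`:
both parts nonempty and `r ∈ Π″`. -/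
def NontrivPart (r : ℕ) (h : 0 < r) (P : Finset (Fin r)) : Prop :=
  P.Nonempty ∧ lastI r h ∉ P

/-- The wall `S_{Π,l} ⊆ V*`. -/
def wallSet (r : ℕ) (P : Finset (Fin r)) (l : ℤ) : Set (Fin r → ℝ) :=
  {c | (∑ i, c i) = 0 ∧ (∑ i ∈ P, c i) = (l : ℝ)}

/-- The simplex `Δ` of admissible parabolic weights. -/
def DeltaSet (r : ℕ) (h : 0 < r) : Set (Fin r → ℝ) :=
  {c | (∑ i, c i) = 0 ∧ (∀ i j : Fin r, i < j → c j < c i) ∧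
    c ⟨0, h⟩ - c (lastI r h) < 1}

/-- The chamber of a (regular) point `c ∈ V*`. -/
def chamberOf (r : ℕ) (c : Fin r → ℝ) : Set (Fin r → ℝ) :=
  {b | (∑ i, b i) = 0 ∧ IsRegular r b ∧ ∀ B, IsOB r B → intPart B b = intPart B c}

/-- `{i,j}` is an edge of `Tree(B)`. -/
def IsTreeEdge (B : Fin (r - 1) → Fin r → ℝ) (i j : Fin r) : Prop :=
  ∃ m, B m = stdRoot r i j ∨ B m = stdRoot r j i

/-- `B` splits along the partition `Π` (with `Π′ = P`): exactly one edge of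
`Tree(B)` joins `Π′` and `Π″`. -/
def SplitsAlong (B : Fin (r - 1) → Fin r → ℝ) (P : Finset (Fin r)) : Prop :=
  ∃! pr : Fin r × Fin r, pr.1 ∈ P ∧ pr.2 ∉ P ∧ IsTreeEdge B pr.1 pr.2

/-- The linking root `β_link = α^{pq}` with `p ∈ Π′`, `q ∈ Π″`. -/
def betaLink (B : Fin (r - 1) → Fin r → ℝ) (P : Finset (Fin r)) : Fin r → ℝ :=
  if h : ∃ pr : Fin r × Fin r, pr.1 ∈ P ∧ pr.2 ∉ P ∧ IsTreeEdge B pr.1 pr.2 then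
    stdRoot r h.choose.1 h.choose.2
  else 0


/-- The Hamiltonian ordered basis `H(σ) = (α^{σ(r−1),σ(r)}, …, α^{σ(1),σ(2)})`
(indices written `0`-based). -/
def ham (r : ℕ) (σ : Equiv.Perm (Fin r)) : Fin (r - 1) → Fin r → ℝ :=
  fun j => stdRoot r (σ ⟨r - 2 - (j : ℕ), by have := j.isLt; omega⟩)
    (σ ⟨r - 1 - (j : ℕ), by have := j.isLt; omega⟩)

/-- `ℋ_m = {H(σ) : σ(1) = m}`. -/
def hamSet (r : ℕ) (h : 0 < r) (m : Fin r) : Finset (Fin (r - 1) → Fin r → ℝ) :=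
  (Finset.univ.filter fun σ : Equiv.Perm (Fin r) => σ ⟨0, h⟩ = m).image (ham r)


end Verlinde

/-!
`Tree(H(σ))` is the path `σ(1) — σ(2) — ⋯ — σ(r)`, so the edges joining `Π′` and `Π″` sit at the
positions `k` where the membership of `σ(k)` in `Π′` changes. As `σ(1) = 1 ∈ Π′` and `r ∈ Π″`,
there is a unique such position iff the path first runs through `Π′` and then through `Π″`, i.e.
iff `σ({1, …, r′}) = Π′`. Since `H` is injective, counting `ℋ₁|Π` amounts to counting the
permutations fixing `1` and mapping `{1, …, r′}` onto `Π′`, and these are glued from a bijection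
`{2, …, r′} ≃ Π′ \ {1}` and a bijection `{r′ + 1, …, r} ≃ Π″`.
-/

open Finset Equiv

theorem Fin.exists_succ_le_and_castSucc_and_not_succ {n : ℕ} {Q : Fin (n + 1) → Prop}
    (h0 : Q 0) {x : Fin (n + 1)} (hx : ¬Q x) :
    ∃ m : Fin n, m.succ ≤ x ∧ Q m.castSucc ∧ ¬Q m.succ := by
  induction x using Fin.induction with
  | zero => exact (hx h0).elim
  | succ i ih =>
    by_cases hi : Q i.castSucc
    · exact ⟨i, le_rfl, hi, hx⟩
    · obtain ⟨m, hm, hQm⟩ := ih hi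
      exact ⟨m, hm.trans Fin.castSucc_lt_succ.le, hQm⟩

theorem Fin.mem_iff_val_lt_card_of_antitone {n : ℕ} {s : Finset (Fin n)}
    (hs : Antitone (· ∈ s)) (x : Fin n) : x ∈ s ↔ (x : ℕ) < #s := by
  constructor
  · intro hx
    have := card_le_card fun y hy => hs (mem_Iic.1 hy) hx
    rw [Fin.card_Iic] at this
    omega
  · intro hx
    by_contra hxs
    have := card_le_card fun y hy => mem_Iio.2 (lt_of_not_ge fun hxy => hxs (hs hxy hy))
    rw [Fin.card_Iio] at this
    omega

namespace Equiv.Perm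

variable {α : Type*}

theorem image_eq_iff [DecidableEq α] (σ : Perm α) (A B : Finset α) :
    A.image σ = B ↔ ∀ x, σ x ∈ B ↔ x ∈ A := by
  rw [Finset.ext_iff, σ.surjective.forall]
  simp only [σ.injective.mem_finset_image, Iff.comm]

theorem card_comp_eq_prod_factorial {ι : Type*} [Finite α] [Fintype ι] {f g : α → ι}
    (h : ∀ i, Nat.card {a // f a = i} = Nat.card {a // g a = i}) :
    Nat.card {σ : Perm α // f ∘ σ = g} = ∏ i, (Nat.card {a // g a = i}).factorial := by
  have := Fintype.ofFinite α
  -- Fibrewise bijections give one `τ` with `f ∘ τ = g`; then `σ ↦ τ⁻¹ * σ` lands in the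
  -- stabiliser of `g`, whose order Mathlib knows.
  let τ : Perm α := ofFiberEquiv fun i => (Finite.card_eq.1 (h i).symm).some
  have hτ : f ∘ τ = g := funext (ofFiberEquiv_map _)
  have htranslate (σ : Perm α) : f ∘ σ = g ↔ g ∘ ⇑(τ⁻¹ * σ) = g := by
    rw [← hτ, Function.comp_assoc, coe_mul, ← Function.comp_assoc τ, ← coe_mul,
      mul_inv_cancel, coe_one, Function.id_comp]
  rw [Nat.card_congr (subtypeEquiv (p := fun σ : Perm α => f ∘ σ = g)
      (q := fun π : Perm α => g ∘ π = g) (Equiv.mulLeft τ⁻¹) htranslate),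
    Nat.card_eq_fintype_card, DomMulAct.stabilizer_card]
  simp only [Nat.card_eq_fintype_card]

end Equiv.Perm

section PointedIndicator

variable {α : Type*} [DecidableEq α] {z : α} {A B : Finset α}

/-- The partition of `α` into the blocks `{z}`, `A \ {z}` and `Aᶜ`. -/
def pointedIndicator (z : α) (A : Finset α) (x : α) : Option Bool :=
  if x = z then none else some (decide (x ∈ A))

theorem pointedIndicator_comp_eq_iff (hzA : z ∈ A) (hzB : z ∈ B) (σ : Perm α) :
    pointedIndicator z B ∘ σ = pointedIndicator z A ↔ σ z = z ∧ A.image σ = B := by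
  rw [σ.image_eq_iff, funext_iff]
  constructor
  · intro h
    have hσz : σ z = z := by simpa [pointedIndicator] using h z
    refine ⟨hσz, fun x => ?_⟩
    obtain rfl | hx := eq_or_ne x z
    · simp [hσz, hzA, hzB]
    · have hσx : σ x ≠ z := by rw [← hσz]; exact σ.injective.ne hx
      simpa [pointedIndicator, hx, hσx] using h x
  · rintro ⟨hσz, h⟩ x
    obtain rfl | hx := eq_or_ne x z
    · simp [pointedIndicator, hσz]
    · have hσx : σ x ≠ z := by rw [← hσz]; exact σ.injective.ne hx
      simp [pointedIndicator, hx, hσx, h x]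

variable [Fintype α]

theorem card_pointedIndicator_fiber (hz : z ∈ A) (i : Option Bool) :
    Nat.card {a // pointedIndicator z A a = i} = i.elim 1 fun b => if b then #A - 1 else #Aᶜ := by
  rcases i with _ | _ | _
  · simp [pointedIndicator]
  · rw [Nat.card_eq_fintype_card, Fintype.card_subtype]
    congr 1; ext a; by_cases ha : a = z <;> simp [pointedIndicator, ha, hz]
  · rw [Nat.card_eq_fintype_card, Fintype.card_subtype, ← card_erase_of_mem hz]
    congr 1; ext a; simp [pointedIndicator]

theorem Equiv.Perm.card_filter_apply_eq_self_and_image_eq (hzA : z ∈ A) (hzB : z ∈ B)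
    (hAB : #A = #B) :
    #{σ : Perm α | σ z = z ∧ A.image σ = B} = (#B - 1).factorial * (#Bᶜ).factorial := by
  rw [← Fintype.card_subtype, ← Nat.card_eq_fintype_card]
  simp_rw [← pointedIndicator_comp_eq_iff hzA hzB]
  have hcompl : #Aᶜ = #Bᶜ := by simp [card_compl, hAB]
  have hfiber (i : Option Bool) : Nat.card {a // pointedIndicator z B a = i} =
      Nat.card {a // pointedIndicator z A a = i} := by
    rw [card_pointedIndicator_fiber hzA, card_pointedIndicator_fiber hzB, hAB, hcompl]
  rw [Perm.card_comp_eq_prod_factorial hfiber, Fintype.prod_option, Fintype.prod_bool,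
    card_pointedIndicator_fiber hzA, card_pointedIndicator_fiber hzA,
    card_pointedIndicator_fiber hzA, hAB, hcompl]
  simp

end PointedIndicator

namespace Verlinde

variable {r n : ℕ}

theorem stdRoot_eq_stdRoot_iff {i j k l : Fin r} (hij : i ≠ j) :
    stdRoot r i j = stdRoot r k l ↔ i = k ∧ j = l := by
  refine ⟨fun h => ?_, fun ⟨hik, hjl⟩ => hik ▸ hjl ▸ rfl⟩
  have hi := congrFun h i
  have hj := congrFun h j
  simp only [stdRoot, if_neg hij, if_neg hij.symm, if_true] at hi hj
  split_ifs at hi hj <;> first | exact ⟨‹i = k›, ‹j = l›⟩ | linarith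

theorem ham_rev (σ : Perm (Fin (n + 1))) (k : Fin n) :
    ham (n + 1) σ k.rev = stdRoot (n + 1) (σ k.castSucc) (σ k.succ) := by
  simp only [ham]
  congr 2 <;> ext <;> simp only [Fin.val_rev, Fin.val_castSucc, Fin.val_succ] <;> omega

theorem isTreeEdge_ham_iff (σ : Perm (Fin (n + 1))) (i j : Fin (n + 1)) :
    IsTreeEdge (ham (n + 1) σ) i j ↔ ∃ k : Fin n, s(σ k.castSucc, σ k.succ) = s(i, j) := by
  refine Fin.rev_surjective.exists.trans (exists_congr fun k => ?_)
  have hk : σ k.castSucc ≠ σ k.succ := σ.injective.ne Fin.castSucc_lt_succ.ne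
  rw [ham_rev, stdRoot_eq_stdRoot_iff hk, stdRoot_eq_stdRoot_iff hk, Sym2.eq_iff]

theorem ham_injective : Function.Injective (ham (n + 1)) := by
  intro σ τ h
  have hadj (k : Fin n) : σ k.castSucc = τ k.castSucc ∧ σ k.succ = τ k.succ := by
    have hk := congrFun h k.rev
    rwa [ham_rev, ham_rev, stdRoot_eq_stdRoot_iff (σ.injective.ne Fin.castSucc_lt_succ.ne)] at hk
  ext1 x
  rcases Fin.eq_zero_or_eq_succ x with rfl | ⟨k, rfl⟩
  · cases n with
    | zero => exact Fin.subsingleton_one.elim _ _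
    | succ m => simpa using (hadj 0).1
  · exact (hadj k).2

variable {σ : Perm (Fin (n + 1))} {P : Finset (Fin (n + 1))}

theorem antitone_mem_of_splitsAlong_ham (h0 : σ 0 ∈ P) (h : SplitsAlong (ham (n + 1) σ) P) :
    Antitone (σ · ∈ P) := by
  obtain ⟨pr, -, huniq⟩ := h
  have hcross (k : Fin n) (p q : Fin (n + 1)) (hpq : s(σ k.castSucc, σ k.succ) = s(p, q))
      (hp : p ∈ P) (hq : q ∉ P) : (p, q) = pr :=
    huniq (p, q) ⟨hp, hq, (isTreeEdge_ham_iff σ p q).2 ⟨k, hpq⟩⟩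
  rw [Fin.antitone_iff_succ_le]
  intro k hk
  by_contra hk'
  -- The path re-enters `P` at `k`, so it must have left `P` at some earlier `m`:
  -- two different edges joining `P` and its complement.
  obtain ⟨m, hmk, hm, hm'⟩ := Fin.exists_succ_le_and_castSucc_and_not_succ (Q := (σ · ∈ P)) h0 hk'
  have hkm := (hcross k _ _ Sym2.eq_swap hk hk').trans (hcross m _ _ rfl hm hm').symm
  simp only [Prod.mk.injEq, σ.injective.eq_iff, Fin.ext_iff, Fin.val_succ,
    Fin.val_castSucc] at hkm
  rw [Fin.le_def, Fin.val_succ, Fin.val_castSucc] at hmk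
  omega

theorem splitsAlong_ham_iff (h0 : σ 0 ∈ P) {y : Fin (n + 1)} (hy : y ∉ P) :
    SplitsAlong (ham (n + 1) σ) P ↔ ∀ x, σ x ∈ P ↔ (x : ℕ) < #P := by
  constructor
  · intro h x
    have hmem (x) : x ∈ P.map σ.symm.toEmbedding ↔ σ x ∈ P := by simp [mem_map_equiv]
    rw [← hmem, ← card_map σ.symm.toEmbedding]
    exact Fin.mem_iff_val_lt_card_of_antitone
      (fun a b hab => by simpa only [hmem] using antitone_mem_of_splitsAlong_ham h0 h hab) x
  · intro h
    have hpos : 0 < #P := (h 0).1 h0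
    have hle : #P ≤ n := by
      have := (h (σ.symm y)).not.1 (by simpa using hy)
      omega
    let m : Fin n := ⟨#P - 1, by omega⟩
    refine ⟨(σ m.castSucc, σ m.succ),
      ⟨(h _).2 ?_, (h _).not.2 ?_, (isTreeEdge_ham_iff σ _ _).2 ⟨m, rfl⟩⟩, ?_⟩
    · simp only [Fin.val_castSucc, m]; omega
    · simp only [Fin.val_succ, m]; omega
    rintro ⟨p, q⟩ ⟨hp, hq, hpq⟩
    obtain ⟨k, hk⟩ := (isTreeEdge_ham_iff σ p q).1 hpq
    rcases Sym2.eq_iff.1 hk with ⟨rfl, rfl⟩ | ⟨rfl, rfl⟩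
    · rw [h, Fin.val_castSucc] at hp
      rw [h, Fin.val_succ] at hq
      obtain rfl : k = m := Fin.ext (by simp only [m]; omega)
      rfl
    · rw [h, Fin.val_succ] at hp
      rw [h, Fin.val_castSucc] at hq
      omega

/-- Description of `ℋ_1|Π` for a nontrivial partition with
`1 ∈ Π′`:  it consists of the `H(σ)` with `σ(1) = 1` and `σ({1,…,r′}) = Π′`,
and has `(r′−1)!·r″!` elements. -/
theorem hamiltonian_basis_splitting_along_partition
    (r : ℕ) (hr : 2 ≤ r)
    (P : Finset (Fin r)) (hP : NontrivPart r (by omega) P)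
    (h1 : (⟨0, by omega⟩ : Fin r) ∈ P) :
    (hamSet r (by omega) ⟨0, by omega⟩).filter (fun B => SplitsAlong B P) =
        (Finset.univ.filter fun σ : Equiv.Perm (Fin r) =>
          σ ⟨0, by omega⟩ = (⟨0, by omega⟩ : Fin r) ∧
            (Finset.univ.filter fun i : Fin r => (i : ℕ) < P.card).image σ = P).image
          (ham r) ∧
      ((hamSet r (by omega) ⟨0, by omega⟩).filter (fun B => SplitsAlong B P)).card =
        (P.card - 1).factorial * (Pᶜ.card).factorial := by
  obtain ⟨n, rfl⟩ : ∃ n, r = n + 1 := ⟨r - 1, by omega⟩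
  simp only [Fin.mk_zero'] at h1 ⊢
  have hsplit : (hamSet (n + 1) n.succ_pos 0).filter (SplitsAlong · P) =
      (univ.filter fun σ : Perm (Fin (n + 1)) =>
        σ 0 = 0 ∧ (univ.filter fun i : Fin (n + 1) => (i : ℕ) < #P).image σ = P).image
        (ham (n + 1)) := by
    rw [hamSet, filter_image, filter_filter]
    refine congrArg (image _) (filter_congr fun σ _ => and_congr_right fun hσ0 => ?_)
    have hσ0 : σ 0 = 0 := hσ0
    rw [splitsAlong_ham_iff (by rwa [hσ0]) hP.2, σ.image_eq_iff]
    simp only [mem_filter, mem_univ, true_and]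
  refine ⟨hsplit, ?_⟩
  have hsegment : #(univ.filter fun i : Fin (n + 1) => (i : ℕ) < #P) = #P := by
    rw [Fin.card_filter_val_lt, min_eq_right ((card_le_univ P).trans_eq (Fintype.card_fin _))]
  rw [hsplit, card_image_of_injective _ ham_injective,
    Perm.card_filter_apply_eq_self_and_image_eq (by simpa using card_pos.2 ⟨_, h1⟩) h1 hsegment]

end Verlinde
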